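/- Let (a,b,c) : (k,l) → (k',l') and (a',b',c') : (k',l') → (k'',l'') be Δ₂-morphisms (triples with a or b equal to ∅, as in the category Δ₂, with its composition law). In the free group F_{k'} on generators x₁,…,x_{k'} write y_i = x₁⋯x_i (y₀ = 1), and likewise in F_{k''}. Define F(a,b,c) = (ψ_a, u_b, c), where ψ_a : F_k → F_{k'} is the homomorphism with ψ_a(x_i) = y_{a(i−1)}⁻¹ y_{a(i)} and (u_b)_i = y_{b(i)}, with the conventions a(i) = 0 for all i if a = ∅ and b(i) = 0 for all i if b = ∅. Then F is compatible with composition up to the 𝔽Δ-equivalence: F((a',b',c') ∘ (a,b,c)) ∼ F(a',b',c') ∘ F(a,b,c), where the right-hand composition is (ψ',u',f') ∘ (ψ,u,f) = (ψ'∘ψ, (ψ'(u_i)·u'_{f(i)})_i, f'∘f), and (ψ,u,f) ∼ (ψ₁,u₁,f) means there exists v with ψ₁(w) = v⁻¹ψ(w)v for all w and (u₁)_i = v⁻¹u_i for all i. (The 'simple calculation' of Section 2.6 of the paper showing that the reduced Δ₂ category embeds in 𝔽Δ.) -/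

import Mathlib

/-- A morphism `(k,l) → (k',l')` in the category `Δ₂`. -/
structure D2Hom (k l k' l' : ℕ) where
  a : Option (Fin (k + 1) →o Fin (k' + 1))
  b : Option (Fin (l + 1) →o Fin (k' + 1))
  c : Fin (l + 1) →o Fin (l' + 1)
  hab : a = none ∨ b = none

/-- Composition in `Δ₂`:
`(a',∅,c') ∘ (a,∅,c) = (a'∘a, ∅, c'∘c)`,
`(a',∅,c') ∘ (∅,b,c) = (∅, a'∘b, c'∘c)`,
`(∅,b',c') ∘ (a,b,c) = (∅, b'∘c, c'∘c)`. -/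
def D2comp {k l k' l' k'' l'' : ℕ} (G : D2Hom k' l' k'' l'') (F : D2Hom k l k' l') :
    D2Hom k l k'' l'' :=
  match G.b with
  | some b' => ⟨none, some (b'.comp F.c), G.c.comp F.c, Or.inl rfl⟩
  | none =>
      { a := G.a.bind fun a' => F.a.map fun af => a'.comp af
        b := G.a.bind fun a' => F.b.map fun bf => a'.comp bf
        c := G.c.comp F.c
        hab := by
          rcases F.hab with h | h
          · left; cases G.a <;> simp [h]
          · right; cases G.a <;> simp [h] }

/-- A representative of a morphism `(k,l) → (k',l')` in the category `𝔽Δ`. -/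
structure FDHom (k l k' l' : ℕ) where
  ψ : FreeGroup (Fin k) →* FreeGroup (Fin k')
  u : Fin (l + 1) → FreeGroup (Fin k')
  f : Fin (l + 1) → Fin (l' + 1)
  hf : Monotone f

/-- The equivalence relation on `𝔽Δ`-representatives: `(ψ,u,f) ∼ (ψ₁,u₁,f)` iff there
is `v` with `ψ₁(w) = v⁻¹ ψ(w) v` for all `w` and `(u₁)_i = v⁻¹ u_i` for all `i`. -/
def FDrel {k l k' l' : ℕ} (P Q : FDHom k l k' l') : Prop :=
  P.f = Q.f ∧ ∃ v : FreeGroup (Fin k'),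
    (∀ w : FreeGroup (Fin k), Q.ψ w = v⁻¹ * P.ψ w * v) ∧
    ∀ i : Fin (l + 1), Q.u i = v⁻¹ * P.u i

/-- Composition of `𝔽Δ`-representatives:
`(ψ',u',f') ∘ (ψ,u,f) = (ψ'∘ψ, (ψ'(u_i)·u'_{f(i)})_i, f'∘f)`. -/
def FDcomp {k l k' l' k'' l'' : ℕ} (Q : FDHom k' l' k'' l'') (P : FDHom k l k' l') :
    FDHom k l k'' l'' :=
  ⟨Q.ψ.comp P.ψ, fun i => Q.ψ (P.u i) * Q.u (P.f i), Q.f ∘ P.f, Q.hf.comp P.hf⟩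

/-- `y_m = x₁ ⋯ x_m ∈ F_{k'}` (0-based: the ordered product of the generators with
index `< m`). -/
def yElt (k' : ℕ) (m : ℕ) : FreeGroup (Fin k') :=
  (((List.finRange k').filter (fun t : Fin k' => decide ((t : ℕ) < m))).map
    FreeGroup.of).prod

/-- Evaluation of an optional order-preserving map, with the convention `∅(i) = 0`. -/
def optApply {p k' : ℕ} (o : Option (Fin (p + 1) →o Fin (k' + 1))) (i : Fin (p + 1)) : ℕ :=
  match o with
  | none => 0
  | some f => (f i : ℕ)

/-- The embedding `F : Δ₂ → 𝔽Δ`, `F(a,b,c) = (ψ_a, u_b, c)`, where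
`ψ_a(x_i) = y_{a(i−1)}⁻¹ y_{a(i)}` and `(u_b)_i = y_{b(i)}`, with the conventions
`a(i) = 0` if `a = ∅` and `b(i) = 0` if `b = ∅`. -/
def Fmap {k l k' l' : ℕ} (F : D2Hom k l k' l') : FDHom k l k' l' :=
  { ψ := FreeGroup.lift fun i : Fin k =>
      (yElt k' (optApply F.a (Fin.castSucc i)))⁻¹ * yElt k' (optApply F.a (Fin.succ i))
    u := fun i => yElt k' (optApply F.b i)
    f := ⇑F.c
    hf := F.c.monotone }

/-
Because `ψ_a(x_i) = y_{a(i-1)}⁻¹ y_{a(i)}` telescopes, `ψ_a(y_j) = y_{a(0)}⁻¹ y_{a(j)}`; in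
particular `ψ_{a'} ∘ ψ_a = ψ_{a' ∘ a}`. So `F` preserves composition on the nose, except when
`a' ≠ ∅` and `b ≠ ∅`: then `a = ∅` makes both `ψ`-components trivial, and the `u`-components
`y_{a'(b(i))}` and `y_{a'(0)}⁻¹ y_{a'(b(i))}` differ by left multiplication with `y_{a'(0)}⁻¹`.
-/

theorem FDHom.ext {k l k' l' : ℕ} {P Q : FDHom k l k' l'} (hψ : P.ψ = Q.ψ) (hu : P.u = Q.u)
    (hf : P.f = Q.f) : P = Q := by
  cases P
  cases Q
  congr

theorem FDrel.refl {k l k' l' : ℕ} (P : FDHom k l k' l') : FDrel P P :=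
  ⟨rfl, 1, fun _ => by group, fun _ => by group⟩

theorem List.filter_finRange_val_lt_succ {k m : ℕ} (h : m < k) :
    (List.finRange k).filter (fun t : Fin k => decide ((t : ℕ) < m + 1)) =
      (List.finRange k).filter (fun t : Fin k => decide ((t : ℕ) < m)) ++ [⟨m, h⟩] := by
  induction k with
  | zero => omega
  | succ k ih =>
    simp only [List.finRange_succ_last, List.filter_append, List.filter_map]
    rcases Nat.lt_succ_iff_lt_or_eq.mp h with h' | rfl
    · simp only [Nat.lt_succ_iff] at ih
      simp [Function.comp_def, ih h', h'.not_ge, h'.le.not_gt]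
    · simp [Function.comp_def, Fin.last]

theorem yElt_zero (k : ℕ) : yElt k 0 = 1 := by
  simp [yElt]

theorem yElt_succ_of_lt {k m : ℕ} (h : m < k) :
    yElt k (m + 1) = yElt k m * FreeGroup.of ⟨m, h⟩ := by
  unfold yElt
  rw [List.filter_finRange_val_lt_succ h]
  simp

theorem lift_yElt {G : Type*} [Group G] {k : ℕ} (h : Fin (k + 1) → G)
    (j : Fin (k + 1)) :
    FreeGroup.lift (fun i : Fin k => (h i.castSucc)⁻¹ * h i.succ) (yElt k j) = (h 0)⁻¹ * h j := by
  induction j using Fin.induction with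
  | zero => simp [yElt_zero]
  | succ i ih =>
    rw [Fin.val_castSucc] at ih
    rw [Fin.val_succ, yElt_succ_of_lt i.isLt, map_mul, ih, Fin.eta, FreeGroup.lift_apply_of]
    group

section Fmap

variable {k₀ l₀ k₁ l₁ k₂ l₂ : ℕ}

theorem Fmap_ψ_of_a_eq_none {F : D2Hom k₀ l₀ k₁ l₁} (h : F.a = none) : (Fmap F).ψ = 1 := by
  ext i
  simp [Fmap, h, optApply]

theorem Fmap_u_of_b_eq_none {F : D2Hom k₀ l₀ k₁ l₁} (h : F.b = none) : (Fmap F).u = 1 := by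
  ext i
  simp [Fmap, h, optApply, yElt_zero]

theorem Fmap_ψ_of (F : D2Hom k₀ l₀ k₁ l₁) (i : Fin k₀) :
    (Fmap F).ψ (FreeGroup.of i) =
      (yElt k₁ (optApply F.a i.castSucc))⁻¹ * yElt k₁ (optApply F.a i.succ) :=
  FreeGroup.lift_apply_of

theorem Fmap_ψ_yElt (F : D2Hom k₀ l₀ k₁ l₁) (j : Fin (k₀ + 1)) :
    (Fmap F).ψ (yElt k₀ j) = (yElt k₁ (optApply F.a 0))⁻¹ * yElt k₁ (optApply F.a j) :=
  lift_yElt (fun j => yElt k₁ (optApply F.a j)) j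

theorem D2comp_a (G : D2Hom k₁ l₁ k₂ l₂) (F : D2Hom k₀ l₀ k₁ l₁) :
    (D2comp G F).a = G.a.bind fun a' => F.a.map a'.comp := by
  unfold D2comp
  split
  · next hb => simp [G.hab.resolve_right (by simp [hb])]
  · rfl

theorem D2comp_c (G : D2Hom k₁ l₁ k₂ l₂) (F : D2Hom k₀ l₀ k₁ l₁) :
    (D2comp G F).c = G.c.comp F.c := by
  unfold D2comp
  split <;> rfl

theorem optApply_D2comp_b_of_a_eq_none {G : D2Hom k₁ l₁ k₂ l₂} (hG : G.a = none)
    (F : D2Hom k₀ l₀ k₁ l₁) (i : Fin (l₀ + 1)) :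
    optApply (D2comp G F).b i = optApply G.b (F.c i) := by
  unfold D2comp
  split
  · next hb => simp [hb, optApply]
  · next hb => simp [hb, hG, optApply]

theorem D2comp_b_of_a_eq_some {G : D2Hom k₁ l₁ k₂ l₂} {a' : Fin (k₁ + 1) →o Fin (k₂ + 1)}
    (hG : G.a = some a') (F : D2Hom k₀ l₀ k₁ l₁) :
    (D2comp G F).b = F.b.map a'.comp := by
  have hb : G.b = none := G.hab.resolve_left (by simp [hG])
  simp [D2comp, hb, hG]

theorem Fmap_D2comp_ψ (G : D2Hom k₁ l₁ k₂ l₂) (F : D2Hom k₀ l₀ k₁ l₁) :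
    (Fmap (D2comp G F)).ψ = (Fmap G).ψ.comp (Fmap F).ψ := by
  rcases hG : G.a with _ | a'
  · rw [Fmap_ψ_of_a_eq_none hG, Fmap_ψ_of_a_eq_none (by simp [D2comp_a, hG]), MonoidHom.one_comp]
  rcases hF : F.a with _ | a
  · rw [Fmap_ψ_of_a_eq_none hF, Fmap_ψ_of_a_eq_none (by simp [D2comp_a, hG, hF]),
      MonoidHom.comp_one]
  have hD : (D2comp G F).a = some (a'.comp a) := by simp [D2comp_a, hG, hF]
  ext i
  simp only [MonoidHom.comp_apply, Fmap_ψ_of, map_mul, map_inv, hD, hF, optApply,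
    Fmap_ψ_yElt, hG, OrderHom.comp_coe, Function.comp_apply]
  group

theorem Fmap_D2comp_f (G : D2Hom k₁ l₁ k₂ l₂) (F : D2Hom k₀ l₀ k₁ l₁) :
    (Fmap (D2comp G F)).f = (FDcomp (Fmap G) (Fmap F)).f :=
  congrArg DFunLike.coe (D2comp_c G F)

theorem Fmap_D2comp_u_of_a_eq_none {G : D2Hom k₁ l₁ k₂ l₂} (hG : G.a = none)
    (F : D2Hom k₀ l₀ k₁ l₁) : (Fmap (D2comp G F)).u = (FDcomp (Fmap G) (Fmap F)).u := by
  ext i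
  simp only [FDcomp, Fmap_ψ_of_a_eq_none hG, MonoidHom.one_apply, one_mul]
  simp [Fmap, optApply_D2comp_b_of_a_eq_none hG]

theorem Fmap_D2comp_u_of_b_eq_none {G : D2Hom k₁ l₁ k₂ l₂} {F : D2Hom k₀ l₀ k₁ l₁}
    (hG : G.b = none) (hF : F.b = none) :
    (Fmap (D2comp G F)).u = (FDcomp (Fmap G) (Fmap F)).u := by
  have hD : (D2comp G F).b = none := by simp [D2comp, hG, hF]
  ext i
  simp [FDcomp, Fmap_u_of_b_eq_none hD, Fmap_u_of_b_eq_none hF, Fmap_u_of_b_eq_none hG]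

theorem Fmap_D2comp {G : D2Hom k₁ l₁ k₂ l₂} {F : D2Hom k₀ l₀ k₁ l₁}
    (h : G.a = none ∨ F.b = none) : Fmap (D2comp G F) = FDcomp (Fmap G) (Fmap F) := by
  refine FDHom.ext (Fmap_D2comp_ψ G F) ?_ (Fmap_D2comp_f G F)
  rcases hG : G.a with _ | a'
  · exact Fmap_D2comp_u_of_a_eq_none hG F
  · exact Fmap_D2comp_u_of_b_eq_none (G.hab.resolve_left (by simp [hG]))
      (h.resolve_left (by simp [hG]))

theorem FDrel_Fmap_D2comp_of_a_eq_some_of_b_eq_some {G : D2Hom k₁ l₁ k₂ l₂}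
    {F : D2Hom k₀ l₀ k₁ l₁} {a' : Fin (k₁ + 1) →o Fin (k₂ + 1)} {b : Fin (l₀ + 1) →o Fin (k₁ + 1)}
    (hG : G.a = some a') (hF : F.b = some b) :
    FDrel (Fmap (D2comp G F)) (FDcomp (Fmap G) (Fmap F)) := by
  have hGb : G.b = none := G.hab.resolve_left (by simp [hG])
  have hFa : F.a = none := F.hab.resolve_right (by simp [hF])
  have hDa : (D2comp G F).a = none := by simp [D2comp_a, hG, hFa]
  refine ⟨Fmap_D2comp_f G F, yElt k₂ (a' 0), fun w => ?_, fun i => ?_⟩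
  · simp [FDcomp, Fmap_ψ_of_a_eq_none hFa, Fmap_ψ_of_a_eq_none hDa]
  · change (Fmap G).ψ (yElt k₁ (optApply F.b i)) * yElt k₂ (optApply G.b (F.c i)) =
      (yElt k₂ (a' 0))⁻¹ * yElt k₂ (optApply (D2comp G F).b i)
    rw [D2comp_b_of_a_eq_some hG, hF, hGb]
    simp [optApply, Fmap_ψ_yElt, hG, yElt_zero]

end Fmap

/-- Section 2.6: `F` is compatible with composition up to the
`𝔽Δ`-equivalence: `F((a',b',c') ∘ (a,b,c)) ∼ F(a',b',c') ∘ F(a,b,c)`. -/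
theorem statement14 :
    ∀ (k₀ l₀ k₁ l₁ k₂ l₂ : ℕ) (F : D2Hom k₀ l₀ k₁ l₁) (G : D2Hom k₁ l₁ k₂ l₂),
      FDrel (Fmap (D2comp G F)) (FDcomp (Fmap G) (Fmap F)) := by
  intro k₀ l₀ k₁ l₁ k₂ l₂ F G
  rcases hG : G.a with _ | a'
  · exact Fmap_D2comp (.inl hG) ▸ FDrel.refl _
  rcases hF : F.b with _ | b
  · exact Fmap_D2comp (.inr hF) ▸ FDrel.refl _
  · exact FDrel_Fmap_D2comp_of_a_eq_some_of_b_eq_some hG hF
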